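/- Simple Moutard transform preserves the conjugate equation: under the same assumptions as for the direct equation, if ∂_z̄ ψ⁺ = -conj(u)·conj(ψ⁺), ω_{f₁,ψ⁺} is a purely imaginary potential for the pair (f₁, ψ⁺), and ψ̃⁺ = ψ⁺ - f₁⁺·ω_{f₁,ψ⁺}/ω_{f₁,f₁⁺}, then ∂_z̄ ψ̃⁺ = -conj(ũ)·conj(ψ̃⁺), where ũ = u + f₁·conj(f₁⁺)/ω_{f₁,f₁⁺}. -/

import Mathlib

/-!
The quotient rule for ∂_z̄ expresses ∂_z̄ ψ̃⁺ through ∂_z̄ ψ⁺, ∂_z̄ f₁⁺, ∂_z̄ ω_{f₁,ψ⁺} and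
∂_z̄ ω_{f₁,f₁⁺}. The potentials are purely imaginary, so conj ω = -ω, and after this
substitution the claim ∂_z̄ ψ̃⁺ = -conj(ũ)·conj(ψ̃⁺) is a field identity.
-/

open Complex ComplexConjugate

/-- Wirtinger derivative ∂_z = (∂_x - i ∂_y)/2. -/
noncomputable def dz (f : ℂ → ℂ) (z : ℂ) : ℂ :=
  (fderiv ℝ f z 1 - Complex.I * fderiv ℝ f z Complex.I) / 2

/-- Wirtinger derivative ∂_z̄ = (∂_x + i ∂_y)/2. -/
noncomputable def dzbar (f : ℂ → ℂ) (z : ℂ) : ℂ :=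
  (fderiv ℝ f z 1 + Complex.I * fderiv ℝ f z Complex.I) / 2

section Wirtinger

variable {f g : ℂ → ℂ} {z : ℂ}

lemma dzbar_sub (hf : DifferentiableAt ℝ f z) (hg : DifferentiableAt ℝ g z) :
    dzbar (fun w => f w - g w) z = dzbar f z - dzbar g z := by
  simp only [dzbar, fderiv_fun_sub hf hg, sub_apply]
  ring

lemma dzbar_mul (hf : DifferentiableAt ℝ f z) (hg : DifferentiableAt ℝ g z) :
    dzbar (fun w => f w * g w) z = dzbar f z * g z + f z * dzbar g z := by
  simp only [dzbar, fderiv_fun_mul hf hg, add_apply, smul_apply, smul_eq_mul]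
  ring

lemma dzbar_inv (hg : DifferentiableAt ℝ g z) (hz : g z ≠ 0) :
    dzbar (fun w => (g w)⁻¹) z = -dzbar g z / g z ^ 2 := by
  have hinv := ((hasFDerivAt_inv' (𝕜 := ℝ) hz).comp z hg.hasFDerivAt).fderiv
  simp only [Function.comp_def] at hinv
  simp only [dzbar, hinv, ContinuousLinearMap.comp_apply, neg_apply,
    ContinuousLinearMap.mulLeftRight_apply]
  field_simp
  ring

lemma dzbar_div (hf : DifferentiableAt ℝ f z) (hg : DifferentiableAt ℝ g z) (hz : g z ≠ 0) :
    dzbar (fun w => f w / g w) z = (dzbar f z * g z - f z * dzbar g z) / g z ^ 2 := by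
  simp_rw [div_eq_mul_inv (f _), dzbar_mul hf (hg.fun_inv hz), dzbar_inv hg hz]
  field_simp
  ring

end Wirtinger

lemma Complex.conj_eq_neg_of_re_eq_zero {w : ℂ} (h : w.re = 0) : conj w = -w := by
  apply Complex.ext <;> simp [h]

theorem simple_moutard_preserves_conjugate_equation_general
    (D : Set ℂ) (hD : IsOpen D) (u f₁ f₁p ψp ωff ωfψ : ℂ → ℂ)
    (hf₁p : ContDiffOn ℝ 1 f₁p D) (hψpC : ContDiffOn ℝ 1 ψp D)
    (hωffC : ContDiffOn ℝ 1 ωff D) (hωfψC : ContDiffOn ℝ 1 ωfψ D)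
    (hfp : ∀ z ∈ D, dzbar f₁p z = -conj (u z) * conj (f₁p z))
    (hψp : ∀ z ∈ D, dzbar ψp z = -conj (u z) * conj (ψp z))
    (hωff2 : ∀ z ∈ D, dzbar ωff z = -conj (f₁ z * f₁p z))
    (hωffim : ∀ z ∈ D, (ωff z).re = 0)
    (hωfψ2 : ∀ z ∈ D, dzbar ωfψ z = -conj (f₁ z * ψp z))
    (hωfψim : ∀ z ∈ D, (ωfψ z).re = 0)
    (hne : ∀ z ∈ D, ωff z ≠ 0) :
    ∀ z ∈ D, dzbar (fun w => ψp w - f₁p w * ωfψ w / ωff w) z =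
      -conj (u z + f₁ z * conj (f₁p z) / ωff z) *
        conj (ψp z - f₁p z * ωfψ z / ωff z) := by
  intro z hz
  have hdiff {f : ℂ → ℂ} (hf : ContDiffOn ℝ 1 f D) : DifferentiableAt ℝ f z :=
    (hf.differentiableOn one_ne_zero).differentiableAt (hD.mem_nhds hz)
  have hnum := (hdiff hf₁p).fun_mul (hdiff hωfψC)
  have hquot : DifferentiableAt ℝ (fun w => f₁p w * ωfψ w / ωff w) z := by
    simpa only [div_eq_mul_inv] using hnum.fun_mul ((hdiff hωffC).fun_inv (hne z hz))
  rw [dzbar_sub (hdiff hψpC) hquot,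
    dzbar_div hnum (hdiff hωffC) (hne z hz), dzbar_mul (hdiff hf₁p) (hdiff hωfψC),
    hψp z hz, hfp z hz, hωfψ2 z hz, hωff2 z hz]
  have hωff_conj := conj_eq_neg_of_re_eq_zero (hωffim z hz)
  have hωfψ_conj := conj_eq_neg_of_re_eq_zero (hωfψim z hz)
  have hωff_ne := hne z hz
  simp only [map_mul, map_sub, map_add, map_div₀, conj_conj, hωff_conj, hωfψ_conj]
  field_simp
  ring

/-- the simple Moutard transform preserves the conjugate equation. -/
theorem simple_moutard_preserves_conjugate_equation
    (D : Set ℂ) (hD : IsOpen D) (u f₁ f₁p ψp ωff ωfψ : ℂ → ℂ)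
    (hu : ContDiffOn ℝ 1 u D) (hf₁ : ContDiffOn ℝ 1 f₁ D)
    (hf₁p : ContDiffOn ℝ 1 f₁p D) (hψpC : ContDiffOn ℝ 1 ψp D)
    (hωffC : ContDiffOn ℝ 1 ωff D) (hωfψC : ContDiffOn ℝ 1 ωfψ D)
    (hf : ∀ z ∈ D, dzbar f₁ z = u z * conj (f₁ z))
    (hfp : ∀ z ∈ D, dzbar f₁p z = -conj (u z) * conj (f₁p z))
    (hψp : ∀ z ∈ D, dzbar ψp z = -conj (u z) * conj (ψp z))
    (hωff1 : ∀ z ∈ D, dz ωff z = f₁ z * f₁p z)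
    (hωff2 : ∀ z ∈ D, dzbar ωff z = -conj (f₁ z * f₁p z))
    (hωffim : ∀ z ∈ D, (ωff z).re = 0)
    (hωfψ1 : ∀ z ∈ D, dz ωfψ z = f₁ z * ψp z)
    (hωfψ2 : ∀ z ∈ D, dzbar ωfψ z = -conj (f₁ z * ψp z))
    (hωfψim : ∀ z ∈ D, (ωfψ z).re = 0)
    (hne : ∀ z ∈ D, ωff z ≠ 0) :
    ∀ z ∈ D, dzbar (fun w => ψp w - f₁p w * ωfψ w / ωff w) z =
      -conj (u z + f₁ z * conj (f₁p z) / ωff z) *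
        conj (ψp z - f₁p z * ωfψ z / ωff z) :=
  simple_moutard_preserves_conjugate_equation_general D hD u f₁ f₁p ψp ωff ωfψ hf₁p hψpC hωffC hωfψC
    hfp hψp hωff2 hωffim hωfψ2 hωfψim hne
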